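/- Let X be a geodesic δ-hyperbolic space with basepoint o. Let γ, γ' : ℝ → X be geodesic lines with boundary endpoints ξ₋ = γ(−∞), ξ₊ = γ(+∞), ξ'₋ = γ'(−∞), ξ'₊ = γ'(+∞), all four distinct. Then sup { |p_γ(b)| : b ∈ γ' } ≤ max over distinct pairs {ξ₁,ξ₂} ⊆ {ξ₋, ξ₊, ξ'₋, ξ'₊} of (ξ₁|ξ₂)_o, plus 284δ, where |x| denotes d(o,x) and p_γ(b) is a closest-point projection of b on γ. -/
import Mathlib


/-- The Gromov product `(x|y)_o`. -/
noncomputable def gromovProd {X : Type*} [MetricSpace X] (o x y : X) : ℝ :=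
  (dist o x + dist o y - dist x y) / 2

/-- `δ`-hyperbolicity in Gromov's four-point sense. -/
def IsDeltaHyperbolic (X : Type*) [MetricSpace X] (δ : ℝ) : Prop :=
  ∀ x₀ x₁ x₂ x₃ : X,
    min (gromovProd x₀ x₁ x₂) (gromovProd x₀ x₂ x₃) - δ ≤ gromovProd x₀ x₁ x₃

/-- A geodesic metric space. -/
def IsGeodesicSpace (X : Type*) [MetricSpace X] : Prop :=
  ∀ x y : X, ∃ f : ℝ → X, f 0 = x ∧ f (dist x y) = y ∧
    ∀ s ∈ Set.Icc (0 : ℝ) (dist x y), ∀ t ∈ Set.Icc (0 : ℝ) (dist x y),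
      dist (f s) (f t) = |s - t|

/-- Gromov product at infinity of the endpoints of two rays `f`, `g`, defined as the
lower limit of Gromov products of points going to infinity along the rays. -/
noncomputable def boundaryProd {X : Type*} [MetricSpace X] (o : X) (f g : ℝ → X) : ℝ :=
  Filter.liminf (fun q : ℝ × ℝ => gromovProd o (f q.1) (g q.2))
    (Filter.atTop ×ˢ Filter.atTop)

lemma gp_nonneg {X : Type*} [MetricSpace X] (o x y : X) : 0 ≤ gromovProd o x y := by
  have h := dist_triangle x o y
  rw [dist_comm x o] at h
  simp only [gromovProd]; linarith

lemma gp_comm {X : Type*} [MetricSpace X] (o x y : X) :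
    gromovProd o x y = gromovProd o y x := by
  simp only [gromovProd]; rw [dist_comm x y]; ring

lemma gp_le_right {X : Type*} [MetricSpace X] (o x y : X) :
    gromovProd o x y ≤ dist o y := by
  have h := dist_triangle o y x
  rw [dist_comm y x] at h
  simp only [gromovProd]; linarith

lemma gp_le_dist {X : Type*} [MetricSpace X] (o x y : X) :
    gromovProd o x y ≤ dist o x := by
  have h := dist_triangle o x y
  simp only [gromovProd]; linarith

lemma gp_base_change {X : Type*} [MetricSpace X] (o p x y : X) :
    gromovProd o x y = dist o p - gromovProd p o x - gromovProd p o y + gromovProd p x y := by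
  simp only [gromovProd]; rw [dist_comm o p]; ring

lemma lemA {X : Type*} [MetricSpace X] {δ : ℝ} (hδ : 0 ≤ δ)
    (hhyp : IsDeltaHyperbolic X δ) (γ : ℝ → X)
    (h₁ : ∀ s t : ℝ, dist (γ s) (γ t) = |s - t|)
    (b : X) (sp : ℝ) (hnear : ∀ s : ℝ, dist b (γ sp) ≤ dist b (γ s)) (u : ℝ) :
    gromovProd (γ sp) b (γ u) ≤ 2 * δ := by
  obtain ⟨a, ha⟩ : ∃ a, a = gromovProd (γ sp) b (γ u) := ⟨_, rfl⟩
  rw [← ha]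
  have ha0 : 0 ≤ a := ha ▸ gp_nonneg _ _ _
  have hale : a ≤ dist (γ sp) (γ u) := ha ▸ gp_le_right _ _ _
  rw [h₁ sp u] at hale
  rcases le_total sp u with hcase | hcase
  · -- m = γ (sp + a)
    have hale' : a ≤ u - sp := by
      rw [abs_of_nonpos (by linarith)] at hale; linarith
    have H := hhyp (γ sp) b (γ u) (γ (sp + a))
    rw [← ha] at H
    have hQ : gromovProd (γ sp) (γ u) (γ (sp + a)) = a := by
      simp only [gromovProd, h₁]
      rw [abs_of_nonpos (show sp - u ≤ 0 by linarith),
        abs_of_nonpos (show sp - (sp + a) ≤ 0 by linarith),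
        abs_of_nonneg (show (0:ℝ) ≤ u - (sp + a) by linarith)]
      ring
    rw [hQ, min_self] at H
    have hR : gromovProd (γ sp) b (γ (sp + a)) ≤ a / 2 := by
      simp only [gromovProd]
      have h1 : dist (γ sp) (γ (sp + a)) = a := by
        rw [h₁, abs_of_nonpos (show sp - (sp + a) ≤ 0 by linarith)]; ring
      have h2 := hnear (sp + a)
      have h3 := dist_comm (γ sp) b
      linarith
    linarith
  · -- m = γ (sp - a)
    have hale' : a ≤ sp - u := by
      rw [abs_of_nonneg (by linarith)] at hale; linarith
    have H := hhyp (γ sp) b (γ u) (γ (sp - a))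
    rw [← ha] at H
    have hQ : gromovProd (γ sp) (γ u) (γ (sp - a)) = a := by
      simp only [gromovProd, h₁]
      rw [abs_of_nonneg (show (0:ℝ) ≤ sp - u by linarith),
        abs_of_nonneg (show (0:ℝ) ≤ sp - (sp - a) by linarith),
        abs_of_nonpos (show u - (sp - a) ≤ 0 by linarith)]
      ring
    rw [hQ, min_self] at H
    have hR : gromovProd (γ sp) b (γ (sp - a)) ≤ a / 2 := by
      simp only [gromovProd]
      have h1 : dist (γ sp) (γ (sp - a)) = a := by
        rw [h₁, abs_of_nonneg (show (0:ℝ) ≤ sp - (sp - a) by linarith)]; ring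
      have h2 := hnear (sp - a)
      have h3 := dist_comm (γ sp) b
      linarith
    linarith

lemma lemB {X : Type*} [MetricSpace X] {δ : ℝ} (hδ : 0 ≤ δ)
    (hhyp : IsDeltaHyperbolic X δ) (o y b w z : X)
    (hb : dist w b + dist b z = dist w z) :
    gromovProd o y b ≤ max (gromovProd o y w) (gromovProd o y z) + 2 * δ := by
  have h1 := hhyp o y b w
  have h2 := hhyp o y b z
  have h3 := hhyp o w b z
  have hcomm : gromovProd o w b = gromovProd o b w := gp_comm _ _ _
  rw [hcomm] at h3
  have hid : gromovProd o b w + gromovProd o b z = dist o b + gromovProd o w z := by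
    simp only [gromovProd]
    rw [dist_comm b w]
    linarith
  have h5 : gromovProd o y b ≤ dist o b := gp_le_right _ _ _
  have hmw := le_max_left (gromovProd o y w) (gromovProd o y z)
  have hmz := le_max_right (gromovProd o y w) (gromovProd o y z)
  rcases le_total (gromovProd o y b) (gromovProd o b w) with hc | hc
  · rw [min_eq_left hc] at h1
    linarith
  · rcases le_total (gromovProd o y b) (gromovProd o b z) with hcz | hcz
    · rw [min_eq_left hcz] at h2
      linarith
    · rcases min_le_iff.mp (le_of_eq (rfl :
        min (gromovProd o b w) (gromovProd o b z) = _)) with _ | _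
      · rcases le_total (gromovProd o b w) (gromovProd o b z) with hm | hm
        · rw [min_eq_left hm] at h3
          -- gp o b z ≥ dist o b - δ ≥ P - δ
          rw [min_eq_right hcz] at h2
          linarith
        · rw [min_eq_right hm] at h3
          rw [min_eq_right hc] at h1
          linarith
      · rcases le_total (gromovProd o b w) (gromovProd o b z) with hm | hm
        · rw [min_eq_left hm] at h3
          rw [min_eq_right hcz] at h2
          linarith
        · rw [min_eq_right hm] at h3
          rw [min_eq_right hc] at h1
          linarith

lemma lemC {X : Type*} [MetricSpace X] {δ : ℝ} (hδ : 0 ≤ δ)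
    (hhyp : IsDeltaHyperbolic X δ) (γ : ℝ → X)
    (h₁ : ∀ s t : ℝ, dist (γ s) (γ t) = |s - t|)
    (b : X) (sp : ℝ) (hnear : ∀ s : ℝ, dist b (γ sp) ≤ dist b (γ s))
    (o : X) (u v : ℝ) (hu : u ≤ sp) (hv : sp ≤ v) :
    dist o (γ sp) ≤ max (gromovProd o (γ u) (γ v))
      (max (gromovProd o (γ u) b) (gromovProd o (γ v) b)) + 4 * δ := by
  have hAx := lemA hδ hhyp γ h₁ b sp hnear u
  have hAy := lemA hδ hhyp γ h₁ b sp hnear v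
  have hxy0 : gromovProd (γ sp) (γ u) (γ v) = 0 := by
    simp only [gromovProd, h₁]
    rw [abs_of_nonneg (show (0:ℝ) ≤ sp - u by linarith),
      abs_of_nonpos (show sp - v ≤ 0 by linarith),
      abs_of_nonpos (show u - v ≤ 0 by linarith)]
    ring
  have hmin1 := hhyp (γ sp) (γ u) o (γ v)
  have hmin2 := hhyp (γ sp) b o (γ v)
  have hmin3 := hhyp (γ sp) b o (γ u)
  rw [hxy0] at hmin1
  rw [gp_comm (γ sp) (γ u) o] at hmin1
  rw [gp_comm (γ sp) b o] at hmin2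
  rw [gp_comm (γ sp) b o] at hmin3
  have hIxy := gp_base_change o (γ sp) (γ u) (γ v)
  have hIxb := gp_base_change o (γ sp) (γ u) b
  have hIyb := gp_base_change o (γ sp) (γ v) b
  rw [hxy0] at hIxy
  have hxb0 : 0 ≤ gromovProd (γ sp) (γ u) b := gp_nonneg _ _ _
  have hyb0 : 0 ≤ gromovProd (γ sp) (γ v) b := gp_nonneg _ _ _
  have hxbc : gromovProd (γ sp) (γ u) b = gromovProd (γ sp) b (γ u) := gp_comm _ _ _
  have hybc : gromovProd (γ sp) (γ v) b = gromovProd (γ sp) b (γ v) := gp_comm _ _ _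
  have hM1 := le_max_left (gromovProd o (γ u) (γ v))
    (max (gromovProd o (γ u) b) (gromovProd o (γ v) b))
  have hM2 := le_trans (le_max_left (gromovProd o (γ u) b) (gromovProd o (γ v) b))
    (le_max_right (gromovProd o (γ u) (γ v)) _)
  have hM3 := le_trans (le_max_right (gromovProd o (γ u) b) (gromovProd o (γ v) b))
    (le_max_right (gromovProd o (γ u) (γ v)) _)
  rcases min_le_iff.mp (show min (gromovProd (γ sp) o (γ u)) (gromovProd (γ sp) o (γ v)) ≤ δ
      from by linarith) with hx | hy
  · rcases le_total (gromovProd (γ sp) o (γ v)) (3 * δ) with hyy | hyy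
    · linarith
    · rcases min_le_iff.mp (show min (gromovProd (γ sp) o b) (gromovProd (γ sp) o (γ v)) ≤ 3 * δ
          from by linarith) with hob | hv3
      · linarith
      · linarith
  · rcases le_total (gromovProd (γ sp) o (γ u)) (3 * δ) with hxx | hxx
    · linarith
    · rcases min_le_iff.mp (show min (gromovProd (γ sp) o b) (gromovProd (γ sp) o (γ u)) ≤ 3 * δ
          from by linarith) with hob | hu3
      · linarith
      · linarith

lemma claimD {X : Type*} [MetricSpace X] {δ : ℝ} (hδ : 0 ≤ δ)
    (hhyp : IsDeltaHyperbolic X δ) (o : X) (f g : ℝ → X)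
    (hf : ∀ s t : ℝ, dist (f s) (f t) = |s - t|)
    (hg : ∀ s t : ℝ, dist (g s) (g t) = |s - t|)
    (B : ℝ) (hB : ∀ a c : ℝ, 0 ≤ a → 0 ≤ c → gromovProd o (f a) (g c) ≤ B)
    (ε : ℝ) (hε : 0 < ε) :
    ∃ A : ℝ, ∀ a c : ℝ, A ≤ a → A ≤ c →
      gromovProd o (f a) (g c) ≤ boundaryProd o f g + 2 * δ + ε := by
  set F : ℝ × ℝ → ℝ := fun q => gromovProd o (f q.1) (g q.2) with hFdef
  set L := boundaryProd o f g with hL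
  set d0f := dist o (f 0) with hd0f
  set d0g := dist o (g 0) with hd0g
  set A0 : ℝ := max 1 (max (B + 1 + d0f) (B + 1 + d0g)) with hA0
  have hA0nonneg : (0:ℝ) ≤ A0 := le_trans zero_le_one (le_max_left _ _)
  have hA0f : B + 1 + d0f ≤ A0 := le_trans (le_max_left _ _) (le_max_right _ _)
  have hA0g : B + 1 + d0g ≤ A0 := le_trans (le_max_right _ _) (le_max_right _ _)
  have hdf : ∀ a : ℝ, 0 ≤ a → a - d0f ≤ dist o (f a) := by
    intro a haa
    have h0 := hf 0 a
    rw [show |(0:ℝ) - a| = a by rw [zero_sub, abs_neg, abs_of_nonneg haa]] at h0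
    have ht := dist_triangle (f 0) o (f a)
    have hc := dist_comm (f 0) o
    linarith
  have hdg : ∀ a : ℝ, 0 ≤ a → a - d0g ≤ dist o (g a) := by
    intro a haa
    have h0 := hg 0 a
    rw [show |(0:ℝ) - a| = a by rw [zero_sub, abs_neg, abs_of_nonneg haa]] at h0
    have ht := dist_triangle (g 0) o (g a)
    have hc := dist_comm (g 0) o
    linarith
  have hff : ∀ a a' : ℝ, 0 ≤ a → 0 ≤ a' → min a a' - d0f ≤ gromovProd o (f a) (f a') := by
    intro a a' haa haa'
    have h1 := hdf a haa
    have h2 := hdf a' haa'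
    have h := hf a a'
    simp only [gromovProd]
    rw [h]
    rcases abs_cases (a - a') with ⟨he, _⟩ | ⟨he, _⟩ <;>
      rcases min_cases a a' with ⟨hm, _⟩ | ⟨hm, _⟩ <;> rw [hm] <;> linarith
  have hgg : ∀ a a' : ℝ, 0 ≤ a → 0 ≤ a' → min a a' - d0g ≤ gromovProd o (g a) (g a') := by
    intro a a' haa haa'
    have h1 := hdg a haa
    have h2 := hdg a' haa'
    have h := hg a a'
    simp only [gromovProd]
    rw [h]
    rcases abs_cases (a - a') with ⟨he, _⟩ | ⟨he, _⟩ <;>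
      rcases min_cases a a' with ⟨hm, _⟩ | ⟨hm, _⟩ <;> rw [hm] <;> linarith
  have hEv : ∀ᶠ q : ℝ × ℝ in Filter.atTop ×ˢ Filter.atTop, A0 ≤ q.1 ∧ A0 ≤ q.2 :=
    ((Filter.eventually_ge_atTop A0).prod_inl (Filter.atTop : Filter ℝ)).and
      ((Filter.eventually_ge_atTop A0).prod_inr (Filter.atTop : Filter ℝ))
  have hEv0 : ∀ᶠ q : ℝ × ℝ in Filter.atTop ×ˢ Filter.atTop, (0:ℝ) ≤ q.1 ∧ (0:ℝ) ≤ q.2 :=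
    ((Filter.eventually_ge_atTop (0:ℝ)).prod_inl (Filter.atTop : Filter ℝ)).and
      ((Filter.eventually_ge_atTop (0:ℝ)).prod_inr (Filter.atTop : Filter ℝ))
  have hfreq : ∃ᶠ q in Filter.atTop ×ˢ Filter.atTop, F q < L + ε := by
    by_contra hcon
    rw [Filter.not_frequently] at hcon
    have hcon' : ∀ᶠ q in Filter.atTop ×ˢ Filter.atTop, L + ε ≤ F q := by
      filter_upwards [hcon] with q hq
      exact not_lt.mp hq
    have hbdd : BddAbove {a : ℝ | ∀ᶠ q in Filter.atTop ×ˢ Filter.atTop, a ≤ F q} := by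
      refine ⟨B, ?_⟩
      rintro x hx
      have hx' : ∀ᶠ q in Filter.atTop ×ˢ Filter.atTop, x ≤ F q := hx
      obtain ⟨q, hq1, hq2, hq3⟩ := (hx'.and hEv0).exists
      exact le_trans hq1 (hB _ _ hq2 hq3)
    have hLs : L = sSup {a : ℝ | ∀ᶠ q in Filter.atTop ×ˢ Filter.atTop, a ≤ F q} := by
      rw [hL]; unfold boundaryProd; exact Filter.liminf_eq
    have : L + ε ≤ L := by
      rw [hLs]; exact le_csSup hbdd hcon'
    linarith
  obtain ⟨⟨a0, c0⟩, hq0, ha0, hc0⟩ := (hfreq.and_eventually hEv).exists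
  refine ⟨A0, ?_⟩
  intro a c ha hc
  have ha' : 0 ≤ a := le_trans hA0nonneg ha
  have hc' : 0 ≤ c := le_trans hA0nonneg hc
  have ha0' : 0 ≤ a0 := le_trans hA0nonneg ha0
  have hc0' : 0 ≤ c0 := le_trans hA0nonneg hc0
  have key1 : B + 1 ≤ gromovProd o (f a) (f a0) := by
    have h := hff a a0 ha' ha0'
    rcases min_cases a a0 with ⟨hm, _⟩ | ⟨hm, _⟩ <;> rw [hm] at h <;> linarith
  have key2 : B + 1 ≤ gromovProd o (g c) (g c0) := by
    have h := hgg c c0 hc' hc0'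
    rcases min_cases c c0 with ⟨hm, _⟩ | ⟨hm, _⟩ <;> rw [hm] at h <;> linarith
  have hFB : gromovProd o (f a) (g c) ≤ B := hB a c ha' hc'
  have hFB2 : gromovProd o (f a0) (g c) ≤ B := hB a0 c ha0' hc'
  have s1 := hhyp o (g c) (f a) (f a0)
  rw [gp_comm o (g c) (f a)] at s1
  rw [gp_comm o (g c) (f a0)] at s1
  rw [min_eq_left (by linarith)] at s1
  have s2 := hhyp o (f a0) (g c) (g c0)
  rw [min_eq_left (by linarith)] at s2
  have hq0' : gromovProd o (f a0) (g c0) < L + ε := hq0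
  linarith

/-- Control of geodesic projections: any closest-point projection on `γ` of a point of `γ'`
lies at distance at most `⊠̄{ξ₋, ξ₊, ξ'₋, ξ'₊} + 284δ` of the base point, where `⊠̄` is the
largest Gromov product of two of the four (distinct) endpoints at infinity. -/
theorem projection_controlled_by_gromov_products
    (X : Type*) [MetricSpace X] [ProperSpace X] (δ : ℝ) (hδ : 0 ≤ δ)
    (hgeo : IsGeodesicSpace X) (hhyp : IsDeltaHyperbolic X δ) (o : X)
    (γ γ' : ℝ → X)
    (h₁ : ∀ s t : ℝ, dist (γ s) (γ t) = |s - t|)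
    (h₂ : ∀ s t : ℝ, dist (γ' s) (γ' t) = |s - t|)
    (hdistinct : ∀ ε₁ ∈ ({1, -1} : Set ℝ), ∀ ε₂ ∈ ({1, -1} : Set ℝ),
      BddAbove {x : ℝ | ∃ s : ℝ, 0 ≤ s ∧ ∃ t : ℝ, 0 ≤ t ∧
        x = gromovProd o (γ (ε₁ * s)) (γ' (ε₂ * t))}) :
    ∀ t sp : ℝ, (∀ s : ℝ, dist (γ' t) (γ sp) ≤ dist (γ' t) (γ s)) →
      dist o (γ sp) ≤
        max (boundaryProd o (fun r => γ (-r)) γ)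
          (max (boundaryProd o (fun r => γ' (-r)) γ')
            (max (boundaryProd o (fun r => γ (-r)) (fun r => γ' (-r)))
              (max (boundaryProd o (fun r => γ (-r)) γ')
                (max (boundaryProd o γ (fun r => γ' (-r)))
                  (boundaryProd o γ γ'))))) + 284 * δ := by
  intro t sp hnear
  set M1 := boundaryProd o (fun r => γ (-r)) γ with hM1def
  set M2 := boundaryProd o (fun r => γ' (-r)) γ' with hM2def
  set M3 := boundaryProd o (fun r => γ (-r)) (fun r => γ' (-r)) with hM3def
  set M4 := boundaryProd o (fun r => γ (-r)) γ' with hM4def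
  set M5 := boundaryProd o γ (fun r => γ' (-r)) with hM5def
  set M6 := boundaryProd o γ γ' with hM6def
  set R : ℝ := max M1 (max M2 (max M3 (max M4 (max M5 M6)))) with hRdef
  have hRM1 : M1 ≤ R := le_max_left _ _
  have hRM3 : M3 ≤ R :=
    le_trans (le_max_left _ _) (le_trans (le_max_right M2 _) (le_max_right M1 _))
  have hRM4 : M4 ≤ R :=
    le_trans (le_trans (le_max_left _ _) (le_max_right M3 _))
      (le_trans (le_max_right M2 _) (le_max_right M1 _))
  have hRM5 : M5 ≤ R :=
    le_trans (le_trans (le_trans (le_max_left _ _) (le_max_right M4 _)) (le_max_right M3 _))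
      (le_trans (le_max_right M2 _) (le_max_right M1 _))
  have hRM6 : M6 ≤ R :=
    le_trans (le_trans (le_trans (le_trans (le_max_right M5 _) (le_max_right M4 _))
      (le_max_right M3 _)) (le_max_right M2 _)) (le_max_right M1 _)
  -- ray parametrization facts
  have hγn : ∀ s t : ℝ, dist (γ (-s)) (γ (-t)) = |s - t| := by
    intro s t
    rw [h₁, show (-s) - (-t) = -(s - t) by ring, abs_neg]
  have hγ'n : ∀ s t : ℝ, dist (γ' (-s)) (γ' (-t)) = |s - t| := by
    intro s t
    rw [h₂, show (-s) - (-t) = -(s - t) by ring, abs_neg]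
  -- bounds for the five pairs
  have hBxy : ∀ a c : ℝ, 0 ≤ a → 0 ≤ c →
      gromovProd o (γ (-a)) (γ c) ≤ dist o (γ 0) := by
    intro a c ha hc
    have hd : dist (γ (-a)) (γ c) = a + c := by
      rw [h₁, abs_of_nonpos (show -a - c ≤ 0 by linarith)]; ring
    have t1 : dist o (γ (-a)) ≤ dist o (γ 0) + dist (γ 0) (γ (-a)) := dist_triangle _ _ _
    have t2 : dist o (γ c) ≤ dist o (γ 0) + dist (γ 0) (γ c) := dist_triangle _ _ _
    have e1 : dist (γ 0) (γ (-a)) = a := by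
      rw [h₁, show (0:ℝ) - -a = a by ring, abs_of_nonneg ha]
    have e2 : dist (γ 0) (γ c) = c := by
      rw [h₁, zero_sub, abs_neg, abs_of_nonneg hc]
    simp only [gromovProd]
    rw [hd]
    linarith
  have hmem : ∀ ε₀ : ℝ, ε₀ ∈ ({1, -1} : Set ℝ) → True := fun _ _ => trivial
  have h1mem : (1:ℝ) ∈ ({1, -1} : Set ℝ) := by left; rfl
  have hm1mem : (-1:ℝ) ∈ ({1, -1} : Set ℝ) := by right; rfl
  obtain ⟨B3, hB3⟩ := hdistinct (-1) hm1mem (-1) hm1mem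
  obtain ⟨B4, hB4⟩ := hdistinct (-1) hm1mem 1 h1mem
  obtain ⟨B5, hB5⟩ := hdistinct 1 h1mem (-1) hm1mem
  obtain ⟨B6, hB6⟩ := hdistinct 1 h1mem 1 h1mem
  have hB3' : ∀ a c : ℝ, 0 ≤ a → 0 ≤ c → gromovProd o (γ (-a)) (γ' (-c)) ≤ B3 := by
    intro a c ha hc
    exact hB3 ⟨a, ha, c, hc, by norm_num⟩
  have hB4' : ∀ a c : ℝ, 0 ≤ a → 0 ≤ c → gromovProd o (γ (-a)) (γ' c) ≤ B4 := by
    intro a c ha hc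
    exact hB4 ⟨a, ha, c, hc, by norm_num⟩
  have hB5' : ∀ a c : ℝ, 0 ≤ a → 0 ≤ c → gromovProd o (γ a) (γ' (-c)) ≤ B5 := by
    intro a c ha hc
    exact hB5 ⟨a, ha, c, hc, by norm_num⟩
  have hB6' : ∀ a c : ℝ, 0 ≤ a → 0 ≤ c → gromovProd o (γ a) (γ' c) ≤ B6 := by
    intro a c ha hc
    exact hB6 ⟨a, ha, c, hc, by norm_num⟩
  -- ε-argument
  refine le_of_forall_pos_le_add ?_
  intro ε hε
  obtain ⟨A1, hD1⟩ := claimD hδ hhyp o (fun r => γ (-r)) γ hγn h₁ (dist o (γ 0)) hBxy ε hε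
  obtain ⟨A3, hD3⟩ := claimD hδ hhyp o (fun r => γ (-r)) (fun r => γ' (-r)) hγn hγ'n B3 hB3' ε hε
  obtain ⟨A4, hD4⟩ := claimD hδ hhyp o (fun r => γ (-r)) γ' hγn h₂ B4 hB4' ε hε
  obtain ⟨A5, hD5⟩ := claimD hδ hhyp o γ (fun r => γ' (-r)) h₁ hγ'n B5 hB5' ε hε
  obtain ⟨A6, hD6⟩ := claimD hδ hhyp o γ γ' h₁ h₂ B6 hB6' ε hε
  set A : ℝ := max A1 (max A3 (max A4 (max A5 (max A6 (max (|sp| + 1) (|t| + 1)))))) with hAdef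
  have hA1 : A1 ≤ A := le_max_left _ _
  have hA3 : A3 ≤ A := by
    rw [hAdef]; exact le_max_of_le_right (le_max_left _ _)
  have hA4 : A4 ≤ A := by
    rw [hAdef]
    exact le_max_of_le_right (le_max_of_le_right (le_max_left _ _))
  have hA5 : A5 ≤ A := by
    rw [hAdef]
    exact le_max_of_le_right (le_max_of_le_right (le_max_of_le_right (le_max_left _ _)))
  have hA6 : A6 ≤ A := by
    rw [hAdef]
    exact le_max_of_le_right (le_max_of_le_right (le_max_of_le_right
      (le_max_of_le_right (le_max_left _ _))))
  have hAsp : |sp| + 1 ≤ A := by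
    rw [hAdef]
    exact le_max_of_le_right (le_max_of_le_right (le_max_of_le_right
      (le_max_of_le_right (le_max_of_le_right (le_max_left _ _)))))
  have hAt : |t| + 1 ≤ A := by
    rw [hAdef]
    exact le_max_of_le_right (le_max_of_le_right (le_max_of_le_right
      (le_max_of_le_right (le_max_of_le_right (le_max_right _ _)))))
  have hspA : -A ≤ sp ∧ sp ≤ A := abs_le.mp (by linarith [abs_nonneg sp])
  have htA : -A ≤ t ∧ t ≤ A := abs_le.mp (by linarith [abs_nonneg t])
  have hApos : 0 ≤ A := le_trans (by positivity) hAsp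
  -- the five products at parameter A
  have hD1' : gromovProd o (γ (-A)) (γ A) ≤ M1 + 2 * δ + ε := hD1 A A hA1 hA1
  have hD3' : gromovProd o (γ (-A)) (γ' (-A)) ≤ M3 + 2 * δ + ε := hD3 A A hA3 hA3
  have hD4' : gromovProd o (γ (-A)) (γ' A) ≤ M4 + 2 * δ + ε := hD4 A A hA4 hA4
  have hD5' : gromovProd o (γ A) (γ' (-A)) ≤ M5 + 2 * δ + ε := hD5 A A hA5 hA5
  have hD6' : gromovProd o (γ A) (γ' A) ≤ M6 + 2 * δ + ε := hD6 A A hA6 hA6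
  -- b = γ' t lies on the geodesic between γ' (-A) and γ' A
  have hbgeod : dist (γ' (-A)) (γ' t) + dist (γ' t) (γ' A) = dist (γ' (-A)) (γ' A) := by
    rw [h₂, h₂, h₂,
      abs_of_nonpos (show -A - t ≤ 0 by linarith [htA.1]),
      abs_of_nonpos (show t - A ≤ 0 by linarith [htA.2]),
      abs_of_nonpos (show -A - A ≤ 0 by linarith)]
    ring
  have hBx := lemB hδ hhyp o (γ (-A)) (γ' t) (γ' (-A)) (γ' A) hbgeod
  have hBy := lemB hδ hhyp o (γ A) (γ' t) (γ' (-A)) (γ' A) hbgeod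
  have hC := lemC hδ hhyp γ h₁ (γ' t) sp hnear o (-A) A hspA.1 hspA.2
  -- combine
  have c1 : gromovProd o (γ (-A)) (γ A) ≤ R + 4 * δ + ε := by linarith
  have c2 : gromovProd o (γ (-A)) (γ' t) ≤ R + 4 * δ + ε := by
    have := max_le (show gromovProd o (γ (-A)) (γ' (-A)) ≤ R + 2 * δ + ε by linarith)
      (show gromovProd o (γ (-A)) (γ' A) ≤ R + 2 * δ + ε by linarith)
    linarith
  have c3 : gromovProd o (γ A) (γ' t) ≤ R + 4 * δ + ε := by
    have := max_le (show gromovProd o (γ A) (γ' (-A)) ≤ R + 2 * δ + ε by linarith)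
      (show gromovProd o (γ A) (γ' A) ≤ R + 2 * δ + ε by linarith)
    linarith
  have hmax : max (gromovProd o (γ (-A)) (γ A))
      (max (gromovProd o (γ (-A)) (γ' t)) (gromovProd o (γ A) (γ' t))) ≤ R + 4 * δ + ε :=
    max_le c1 (max_le c2 c3)
  linarith
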